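/- For any binary tree B, the path u(B) is weakly above the canopy path v(B). -/

import Mathlib

/-! For `B = (L, r, R)` the word `w(B)` is `a w(L) ā b w(R) b̄` (a bracket dropped when the
subtree is empty), so `u(B) = u(L) N · u(R) E` and `v(B) = v(L) N · E v(R)`. Being weakly above
is preserved by concatenation, by appending `N` to both paths, and by passing from `(u, v)` to
`(u E, E v)`; induction on `B` concludes. -/

/-- A lattice path on the square grid starting at `(0,0)`:
`true` = north step `N`, `false` = east step `E`. -/
abbrev LPath := List Bool

/-- The x-coordinate of the rightmost point at height `y` lying weakly above `v`,
i.e. the number of east steps of `v` occurring at height at most `y`. -/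
def horizAbs (v : LPath) (y : ℕ) : ℕ :=
  ((List.range v.length).filter
    (fun i => v.getD i true = false ∧ (v.take i).count true ≤ y)).length

/-- The horizontal distance `horiz_v(p)` of the point `p` of `u` reached after `j` steps:
the maximal number of east steps that can be appended at `p` without crossing `v`. -/
def horiz (v u : LPath) (j : ℕ) : ℕ :=
  horizAbs v ((u.take j).count true) - (u.take j).count false

/-- `u` has the same endpoints as `v` (same numbers of north and east steps) and
stays weakly above `v`. -/
def WeaklyAbove (u v : LPath) : Prop :=
  u.count true = v.count true ∧ u.count false = v.count false ∧
  ∀ j : ℕ, (u.take j).count false ≤ horizAbs v ((u.take j).count true)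

/-- The covering relation of `Tam(v)`: the point `p` of `u` after `j` steps is preceded
by an east step and followed by a north step, `k` is the index of the first point `p'`
after `p` with `horiz_v(p') = horiz_v(p)`, and `u'` is obtained from `u` by exchanging
that east step with the subpath of `u` from `p` to `p'`. -/
def TamCovers (v u u' : LPath) : Prop :=
  ∃ j k : ℕ, 0 < j ∧ j < k ∧ k ≤ u.length ∧
    u.getD (j - 1) true = false ∧ u.getD j false = true ∧
    horiz v u k = horiz v u j ∧
    (∀ l : ℕ, j < l → l < k → horiz v u l ≠ horiz v u j) ∧
    u' = u.take (j - 1) ++ (u.drop j).take (k - j) ++ [false] ++ u.drop k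

/-- The order of `Tam(v)`: the reflexive-transitive closure of the covering relation. -/
def TamLe (v : LPath) : LPath → LPath → Prop := Relation.ReflTransGen (TamCovers v)

/-- The underlying set of `Tam(v)`: all paths weakly above `v` with the same endpoints. -/
abbrev TamSet (v : LPath) := {u : LPath // WeaklyAbove u v}

/-- Binary trees: either empty, or a root vertex with left and right binary subtrees. -/
inductive BTree where
  | nil : BTree
  | node : BTree → BTree → BTree
deriving DecidableEq

/-- The alphabet `{a, ā, b, b̄}`. -/
inductive Letter where
  | a : Letter
  | abar : Letter
  | b : Letter
  | bbar : Letter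
deriving DecidableEq

/-- The word `w(B)` obtained by walking clockwise around `B` starting at the root,
writing `a` (resp. `ā`) at the first (resp. second) traversal of each left edge and
`b` (resp. `b̄`) at the first (resp. second) traversal of each right edge. -/
def wordOf : BTree → List Letter
  | .nil => []
  | .node l r =>
      (if l = BTree.nil then [] else Letter.a :: (wordOf l ++ [Letter.abar])) ++
      (if r = BTree.nil then [] else Letter.b :: (wordOf r ++ [Letter.bbar]))

/-- The path `u(B)`: the subword of `w(B)` in the letters `{ā, b̄}`, with `ā` read as a
north step (`true`) and `b̄` as an east step (`false`). -/
def uPath (B : BTree) : LPath :=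
  (wordOf B).filterMap fun x =>
    match x with
    | Letter.abar => some true
    | Letter.bbar => some false
    | _ => none

/-- The canopy `v(B)`: the subword of `w(B)` in the letters `{ā, b}`, with `ā` read as a
north step (`true`) and `b` as an east step (`false`). -/
def vPath (B : BTree) : LPath :=
  (wordOf B).filterMap fun x =>
    match x with
    | Letter.abar => some true
    | Letter.b => some false
    | _ => none

/-- The number of vertices of a binary tree. -/
def bsize : BTree → ℕ
  | .nil => 0
  | .node l r => bsize l + bsize r + 1

theorem horizAbs_eq_countP (v : LPath) (y : ℕ) :
    horizAbs v y = (List.range v.length).countP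
      (fun i => v.getD i true = false ∧ (v.take i).count true ≤ y) :=
  (List.countP_eq_length_filter ..).symm

@[simp] theorem horizAbs_nil (y : ℕ) : horizAbs [] y = 0 := rfl

@[simp] theorem horizAbs_false_cons (v : LPath) (y : ℕ) :
    horizAbs (false :: v) y = horizAbs v y + 1 := by
  simp [horizAbs_eq_countP, List.range_succ_eq_map, List.countP_map, Function.comp_def]

@[simp] theorem horizAbs_true_cons_zero (v : LPath) : horizAbs (true :: v) 0 = 0 := by
  simp [horizAbs_eq_countP, List.range_succ_eq_map, List.countP_map, Function.comp_def]

@[simp] theorem horizAbs_true_cons_succ (v : LPath) (y : ℕ) :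
    horizAbs (true :: v) (y + 1) = horizAbs v y := by
  simp [horizAbs_eq_countP, List.range_succ_eq_map, List.countP_map, Function.comp_def]

theorem horizAbs_le_horizAbs_append (v w : LPath) (y : ℕ) :
    horizAbs v y ≤ horizAbs (v ++ w) y := by
  induction v generalizing y with
  | nil => simp
  | cons c v ih => rcases c, y with ⟨_ | _, _ | y⟩ <;> simp [ih]

theorem horizAbs_append_count_true_add (v w : LPath) (t : ℕ) :
    horizAbs (v ++ w) (v.count true + t) = v.count false + horizAbs w t := by
  induction v with
  | nil => simp
  | cons c v ih => cases c <;> simp [ih, Nat.add_right_comm _ 1]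

theorem horizAbs_count_true (v : LPath) : horizAbs v (v.count true) = v.count false := by
  simpa using horizAbs_append_count_true_add v [] 0

theorem weaklyAbove_nil : WeaklyAbove [] [] := ⟨rfl, rfl, by simp⟩

theorem weaklyAbove_north : WeaklyAbove [true] [true] :=
  ⟨rfl, rfl, fun j => by cases j <;> simp⟩

theorem WeaklyAbove.append {u₁ v₁ u₂ v₂ : LPath} (h₁ : WeaklyAbove u₁ v₁)
    (h₂ : WeaklyAbove u₂ v₂) : WeaklyAbove (u₁ ++ u₂) (v₁ ++ v₂) := by
  obtain ⟨ht₁, hf₁, hp₁⟩ := h₁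
  obtain ⟨ht₂, hf₂, hp₂⟩ := h₂
  refine ⟨by simp [ht₁, ht₂], by simp [hf₁, hf₂], fun j => ?_⟩
  rcases le_total j u₁.length with hj | hj
  · simpa [List.take_append, Nat.sub_eq_zero_of_le hj] using
      (hp₁ j).trans (horizAbs_le_horizAbs_append v₁ v₂ _)
  · simpa [List.take_append, List.take_of_length_le hj, ht₁, hf₁,
      horizAbs_append_count_true_add] using hp₂ (j - u₁.length)

theorem WeaklyAbove.append_east {u v : LPath} (h : WeaklyAbove u v) :
    WeaklyAbove (u ++ [false]) (false :: v) := by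
  obtain ⟨ht, hf, hp⟩ := h
  refine ⟨by simp [ht], by simp [hf], fun j => ?_⟩
  rcases le_or_gt j u.length with hj | hj
  · simpa [List.take_append, Nat.sub_eq_zero_of_le hj] using (hp j).trans (Nat.le_succ _)
  · rw [List.take_append, List.take_of_length_le hj.le,
      show j - u.length = (j - u.length - 1) + 1 by omega]
    simp [ht, hf, horizAbs_count_true]

theorem uPath_node (l r : BTree) : uPath (.node l r) =
    (if l = .nil then [] else uPath l ++ [true]) ++
      (if r = .nil then [] else uPath r ++ [false]) := by
  simp only [uPath, wordOf]
  split_ifs <;> simp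

theorem vPath_node (l r : BTree) : vPath (.node l r) =
    (if l = .nil then [] else vPath l ++ [true]) ++
      (if r = .nil then [] else false :: vPath r) := by
  simp only [vPath, wordOf]
  split_ifs <;> simp

/-- **Lemma 4.** For any binary tree `B`, the path `u(B)` is weakly above the
canopy `v(B)` (in particular they have the same endpoints). -/
theorem u_weakly_above_canopy (B : BTree) : WeaklyAbove (uPath B) (vPath B) := by
  induction B with
  | nil => exact weaklyAbove_nil
  | node l r ihl ihr =>
    rw [uPath_node, vPath_node]
    refine WeaklyAbove.append ?_ ?_
    · split_ifs
      exacts [weaklyAbove_nil, ihl.append weaklyAbove_north]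
    · split_ifs
      exacts [weaklyAbove_nil, ihr.append_east]
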